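/- Let S = conv({p₁,p₂,p₃}) ⊂ ℝⁿ be a nondegenerate triangle, C ⊂ ℝⁿ a 0-symmetric convex body, and set R_{ij} := R({p_i,p_j},C), R₁₂₃ := R(S,C). If 0 < R₁₃ ≤ R₁₂, then R₁₂ − R₁₃ ≤ R₂₃ ≤ R₁₂ + R₁₃, max{R₁₂,R₁₃,R₂₃} ≤ R₁₂₃, and √3·(2R₁₂R₁₃ + 2R₁₂R₂₃ + 2R₁₃R₂₃ − R₁₂² − R₁₃² − R₂₃²)·R₁₂₃ ≤ 8R₁₂R₁₃R₂₃. -/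

import Mathlib

/-! The gauge of a symmetric convex body `C` is a seminorm `‖·‖_C`, and the midpoint is an optimal
centre for two points, so `R({p, q}, C) = ‖p - q‖_C / 2`: the first claim is the triangle
inequality and the second is `‖p - q‖_C ≤ 2 R(S, C)` for `p, q ∈ S`. For the third, let `a, b, c` be
the side lengths and `Q = 2ab + 2bc + 2ca - a² - b² - c²`. The point with barycentric weights
`a(b + c - a) : b(c + a - b) : c(a + b - c)` lies within `2abc / Q` of every vertex, so
`Q R₁₂₃ ≤ 2abc`; as `Q = 4 (2R₁₂R₁₃ + 2R₁₂R₂₃ + 2R₁₃R₂₃ - R₁₂² - R₁₃² - R₂₃²)` and `√3 ≤ 2`, this is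
stronger than the claimed bound. -/

open Pointwise

noncomputable def circumradius {n : ℕ} (X C : Set (Fin n → ℝ)) : ℝ :=
  sInf {r : ℝ | 0 ≤ r ∧ ∃ x : Fin n → ℝ, x +ᵥ X ⊆ r • C}

section Gauge

variable {E : Type*} [AddCommGroup E] [Module ℝ E] {C : Set E}

theorem mem_smul_of_gauge_le_of_lt (hconv : Convex ℝ C) (habs : Absorbent ℝ C) {x : E}
    {r r' : ℝ} (hx : gauge C x ≤ r) (hr : r < r') : x ∈ r' • C := by
  have h := setOfPred_gauge_le_eq hconv habs.zero_mem habs ((gauge_nonneg x).trans hx)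
  exact Set.mem_iInter₂.1 (h.subset hx) r' hr

theorem neg_vadd_convexHull_subset_smul (hconv : Convex ℝ C) (habs : Absorbent ℝ C)
    {s : Set E} {z : E} {r r' : ℝ} (h : ∀ p ∈ s, gauge C (p - z) ≤ r) (hr : r < r') :
    -z +ᵥ convexHull ℝ s ⊆ r' • C := by
  rintro _ ⟨y, hy, rfl⟩
  refine convexHull_min (fun p hp => ?_) ((hconv.smul r').translate_preimage_right (-z)) hy
  simpa only [Set.mem_preimage, neg_add_eq_sub] using
    mem_smul_of_gauge_le_of_lt hconv habs (h p hp) hr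

end Gauge

theorem zero_mem_interior_of_eq_neg {E : Type*} [AddCommGroup E] [Module ℝ E]
    [TopologicalSpace E] [IsTopologicalAddGroup E] [ContinuousConstSMul ℝ E] {C : Set E}
    (hconv : Convex ℝ C) (hsym : C = -C) (hint : (interior C).Nonempty) :
    (0 : E) ∈ interior C := by
  obtain ⟨y, hy⟩ := hint
  have hneg : -interior C ⊆ interior C :=
    interior_maximal (by
      conv_rhs => rw [hsym]
      exact Set.neg_subset_neg.2 interior_subset) isOpen_interior.neg
  have hy' : -y ∈ interior C := hneg (by rwa [Set.mem_neg, neg_neg])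
  simpa using hconv.interior hy hy' (by norm_num : (0 : ℝ) ≤ 2⁻¹) (by norm_num : (0 : ℝ) ≤ 2⁻¹)
    (by norm_num)

section Seminorm

variable {E : Type*} [AddCommGroup E] [Module ℝ E] (N : Seminorm ℝ E)

theorem Seminorm.map_sub_combo_le {u v w : ℝ} (hv : 0 ≤ v) (hw : 0 ≤ w) (huvw : u + v + w = 1)
    (p q r : E) : N (p - (u • p + v • q + w • r)) ≤ v * N (p - q) + w * N (p - r) := by
  obtain rfl : u = 1 - v - w := by linarith
  calc N (p - ((1 - v - w) • p + v • q + w • r)) = N (v • (p - q) + w • (p - r)) := by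
        congr 1; module
    _ ≤ N (v • (p - q)) + N (w • (p - r)) := map_add_le_add N _ _
    _ = v * N (p - q) + w * N (p - r) := by
        rw [map_smul_eq_mul, map_smul_eq_mul, Real.norm_of_nonneg hv, Real.norm_of_nonneg hw]

theorem Seminorm.map_sub_le_add_map_sub (x y z : E) : N (x - z) ≤ N (x - y) + N (y - z) := by
  simpa only [sub_add_sub_cancel] using map_add_le_add N (x - y) (y - z)

theorem Seminorm.triangle_inequalities {p₁ p₂ p₃ : E} {a b c : ℝ} (ha : N (p₂ - p₃) = a)
    (hb : N (p₁ - p₃) = b) (hc : N (p₁ - p₂) = c) : a ≤ b + c ∧ b ≤ c + a ∧ c ≤ a + b := by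
  have hbc := N.map_sub_le_add_map_sub p₂ p₁ p₃
  have hca := N.map_sub_le_add_map_sub p₁ p₂ p₃
  have hab := N.map_sub_le_add_map_sub p₁ p₃ p₂
  rw [map_sub_rev N p₂ p₁] at hbc
  rw [map_sub_rev N p₃ p₂] at hab
  refine ⟨?_, ?_, ?_⟩ <;> linarith

/-- The centre has barycentric weights `a (b + c - a) : b (c + a - b) : c (a + b - c)`, chosen so
that the bound of `Seminorm.map_sub_combo_le` is the same at each of the three vertices. -/
theorem Seminorm.exists_forall_map_sub_le_of_triangle {p₁ p₂ p₃ : E} {a b c : ℝ}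
    (ha : N (p₂ - p₃) = a) (hb : N (p₁ - p₃) = b) (hc : N (p₁ - p₂) = c)
    (hQ : 0 < 2 * a * b + 2 * b * c + 2 * c * a - a ^ 2 - b ^ 2 - c ^ 2) :
    ∃ z, ∀ p ∈ ({p₁, p₂, p₃} : Set E),
      N (p - z) ≤ 2 * a * b * c / (2 * a * b + 2 * b * c + 2 * c * a - a ^ 2 - b ^ 2 - c ^ 2) := by
  set Q := 2 * a * b + 2 * b * c + 2 * c * a - a ^ 2 - b ^ 2 - c ^ 2
  have ha₀ : 0 ≤ a := ha ▸ apply_nonneg N _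
  have hb₀ : 0 ≤ b := hb ▸ apply_nonneg N _
  have hc₀ : 0 ≤ c := hc ▸ apply_nonneg N _
  obtain ⟨hbc, hca, hab⟩ := N.triangle_inequalities ha hb hc
  set w₁ := a * (b + c - a) / Q
  set w₂ := b * (c + a - b) / Q
  set w₃ := c * (a + b - c) / Q
  have hw₁ : 0 ≤ w₁ := by have := sub_nonneg.2 hbc; positivity
  have hw₂ : 0 ≤ w₂ := by have := sub_nonneg.2 hca; positivity
  have hw₃ : 0 ≤ w₃ := by have := sub_nonneg.2 hab; positivity
  have hsum : w₁ + w₂ + w₃ = 1 := by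
    simp only [w₁, w₂, w₃]; field_simp; ring
  refine ⟨w₁ • p₁ + w₂ • p₂ + w₃ • p₃, ?_⟩
  rintro p (rfl | rfl | rfl)
  · calc N (p - (w₁ • p + w₂ • p₂ + w₃ • p₃)) ≤ w₂ * c + w₃ * b := by
          simpa only [hb, hc] using N.map_sub_combo_le hw₂ hw₃ hsum p p₂ p₃
      _ = 2 * a * b * c / Q := by simp only [w₂, w₃]; field_simp; ring
  · calc N (p - (w₁ • p₁ + w₂ • p + w₃ • p₃)) ≤ w₁ * c + w₃ * a := by
          convert N.map_sub_combo_le (u := w₂) hw₁ hw₃ (by linarith) p p₁ p₃ using 2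
          · abel
          · rw [map_sub_rev, hc]
          · rw [ha]
      _ = 2 * a * b * c / Q := by simp only [w₁, w₃]; field_simp; ring
  · calc N (p - (w₁ • p₁ + w₂ • p₂ + w₃ • p)) ≤ w₁ * b + w₂ * a := by
          convert N.map_sub_combo_le (u := w₃) hw₁ hw₂ (by linarith) p p₁ p₂ using 2
          · abel
          · rw [map_sub_rev, hb]
          · rw [map_sub_rev, ha]
      _ = 2 * a * b * c / Q := by simp only [w₁, w₂]; field_simp; ring

end Seminorm

section Circumradius

variable {n : ℕ} {X C : Set (Fin n → ℝ)}

theorem circumradius_nonneg : 0 ≤ circumradius X C :=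
  Real.sInf_nonneg fun _ hr => hr.1

theorem circumradius_le_of_gauge_sub_le (hconv : Convex ℝ C) (habs : Absorbent ℝ C)
    {s : Set (Fin n → ℝ)} (hXs : X ⊆ convexHull ℝ s) {z : Fin n → ℝ} {r : ℝ} (hr : 0 ≤ r)
    (h : ∀ p ∈ s, gauge C (p - z) ≤ r) : circumradius X C ≤ r :=
  -- `C` need not be closed, so `gauge C x ≤ r` only gives `x ∈ r' • C` for `r' > r`.
  le_of_forall_pos_le_add fun _ hε => csInf_le ⟨0, fun _ hr => hr.1⟩
    ⟨by positivity, -z, (Set.vadd_set_mono hXs).trans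
      (neg_vadd_convexHull_subset_smul hconv habs h (lt_add_of_pos_right r hε))⟩

theorem exists_vadd_subset_smul_of_finite (hconv : Convex ℝ C) (habs : Absorbent ℝ C)
    {s : Set (Fin n → ℝ)} (hs : s.Finite) (hXs : X ⊆ convexHull ℝ s) :
    ∃ r : ℝ, 0 ≤ r ∧ ∃ x : Fin n → ℝ, x +ᵥ X ⊆ r • C := by
  obtain ⟨r, hr⟩ := (hs.image (gauge C)).bddAbove
  refine ⟨max r 0 + 1, by positivity, _, (Set.vadd_set_mono hXs).trans
    (neg_vadd_convexHull_subset_smul hconv habs (z := 0) (fun p hp => ?_) (lt_add_one _))⟩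
  rw [sub_zero]
  exact (hr ⟨p, hp, rfl⟩).trans (le_max_left r 0)

theorem half_gauge_sub_le_circumradius (hbal : Balanced ℝ C) (hconv : Convex ℝ C)
    (habs : Absorbent ℝ C) (hX : ∃ r : ℝ, 0 ≤ r ∧ ∃ x : Fin n → ℝ, x +ᵥ X ⊆ r • C)
    {p q : Fin n → ℝ} (hp : p ∈ X) (hq : q ∈ X) : gauge C (p - q) / 2 ≤ circumradius X C := by
  refine le_csInf hX ?_
  rintro r ⟨hr, x, hx⟩
  have hxp : gauge C (x + p) ≤ r := gauge_le_of_mem hr (hx ⟨p, hp, rfl⟩)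
  have hxq : gauge C (x + q) ≤ r := gauge_le_of_mem hr (hx ⟨q, hq, rfl⟩)
  have := map_sub_le_add (gaugeSeminorm hbal hconv habs) (x +ᵥ p) (x +ᵥ q)
  simp only [gaugeSeminorm_toFun, vadd_eq_add, add_sub_add_left_eq_sub] at this
  linarith

theorem circumradius_pair (hbal : Balanced ℝ C) (hconv : Convex ℝ C) (habs : Absorbent ℝ C)
    (p q : Fin n → ℝ) : circumradius {p, q} C = gauge C (p - q) / 2 := by
  have hsub : ({p, q} : Set (Fin n → ℝ)) ⊆ convexHull ℝ {p, q} := subset_convexHull ℝ _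
  refine le_antisymm (circumradius_le_of_gauge_sub_le hconv habs hsub
    (z := (2⁻¹ : ℝ) • (p + q)) (div_nonneg (gauge_nonneg _) zero_le_two) ?_) <|
    half_gauge_sub_le_circumradius hbal hconv habs
      (exists_vadd_subset_smul_of_finite hconv habs (Set.toFinite _) hsub) (by simp) (by simp)
  have hhalf : ∀ x : Fin n → ℝ, gauge C ((2⁻¹ : ℝ) • x) = gauge C x / 2 := fun x => by
    rw [gauge_smul_of_nonneg (by norm_num), smul_eq_mul, inv_mul_eq_div]
  have hrev : gauge C (q - p) = gauge C (p - q) :=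
    map_sub_rev (gaugeSeminorm hbal hconv habs) q p
  rintro x (rfl | rfl)
  · rw [show x - (2⁻¹ : ℝ) • (x + q) = (2⁻¹ : ℝ) • (x - q) by module, hhalf]
  · rw [show x - (2⁻¹ : ℝ) • (p + x) = (2⁻¹ : ℝ) • (x - p) by module, hhalf, hrev]

theorem mul_circumradius_convexHull_triple_le (hbal : Balanced ℝ C) (hconv : Convex ℝ C)
    (habs : Absorbent ℝ C) {p₁ p₂ p₃ : Fin n → ℝ} {a b c : ℝ} (ha : gauge C (p₂ - p₃) = a)
    (hb : gauge C (p₁ - p₃) = b) (hc : gauge C (p₁ - p₂) = c) :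
    (2 * a * b + 2 * b * c + 2 * c * a - a ^ 2 - b ^ 2 - c ^ 2) *
      circumradius (convexHull ℝ {p₁, p₂, p₃}) C ≤ 2 * a * b * c := by
  rcases le_or_gt (2 * a * b + 2 * b * c + 2 * c * a - a ^ 2 - b ^ 2 - c ^ 2) 0 with hQ | hQ
  · have habc : 0 ≤ 2 * a * b * c := by
      rw [← ha, ← hb, ← hc]
      have := gauge_nonneg (s := C) (p₂ - p₃)
      have := gauge_nonneg (s := C) (p₁ - p₃)
      have := gauge_nonneg (s := C) (p₁ - p₂)
      positivity
    exact (mul_nonpos_of_nonpos_of_nonneg hQ circumradius_nonneg).trans habc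
  · obtain ⟨z, hz⟩ :=
      (gaugeSeminorm hbal hconv habs).exists_forall_map_sub_le_of_triangle ha hb hc hQ
    rw [mul_comm, ← le_div_iff₀ hQ]
    exact circumradius_le_of_gauge_sub_le hconv habs subset_rfl
      ((gauge_nonneg _).trans (hz p₁ (by simp))) hz

end Circumradius

theorem circumradius_triangle_bounds_higher_dim_general {n : ℕ} (C : Set (Fin n → ℝ))
    (hconv : Convex ℝ C) (hint : (interior C).Nonempty)
    (hsym : C = -C)
    (p₁ p₂ p₃ : Fin n → ℝ)
    (R12 R13 R23 R123 : ℝ)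
    (hR12 : R12 = circumradius {p₁, p₂} C) (hR13 : R13 = circumradius {p₁, p₃} C)
    (hR23 : R23 = circumradius {p₂, p₃} C)
    (hR123 : R123 = circumradius (convexHull ℝ {p₁, p₂, p₃}) C) :
    (R12 - R13 ≤ R23 ∧ R23 ≤ R12 + R13) ∧
    max R12 (max R13 R23) ≤ R123 ∧
    Real.sqrt 3 * (2 * R12 * R13 + 2 * R12 * R23 + 2 * R13 * R23
      - R12 ^ 2 - R13 ^ 2 - R23 ^ 2) * R123 ≤ 8 * R12 * R13 * R23 := by
  have habs : Absorbent ℝ C := absorbent_nhds_zero <|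
    mem_interior_iff_mem_nhds.1 (zero_mem_interior_of_eq_neg hconv hsym hint)
  have hbal : Balanced ℝ C := (balanced_iff_neg_mem hconv).2 fun x hx => by
    rw [hsym]; exact Set.neg_mem_neg.2 hx
  have hS := exists_vadd_subset_smul_of_finite hconv habs (Set.toFinite {p₁, p₂, p₃}) subset_rfl
  have hside : ∀ p ∈ ({p₁, p₂, p₃} : Set (Fin n → ℝ)), ∀ q ∈ ({p₁, p₂, p₃} : Set (Fin n → ℝ)),
      gauge C (p - q) / 2 ≤ R123 := fun p hp q hq => hR123 ▸
    half_gauge_sub_le_circumradius hbal hconv habs hS (subset_convexHull ℝ _ hp)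
      (subset_convexHull ℝ _ hq)
  rw [circumradius_pair hbal hconv habs] at hR12 hR13 hR23
  set a := gauge C (p₂ - p₃)
  set b := gauge C (p₁ - p₃)
  set c := gauge C (p₁ - p₂)
  have hQ := hR123 ▸ mul_circumradius_convexHull_triple_le hbal hconv habs
    (a := a) (b := b) (c := c) rfl rfl rfl
  obtain ⟨hbc, hca, hab⟩ := (gaugeSeminorm hbal hconv habs).triangle_inequalities
    (a := a) (b := b) (c := c) rfl rfl rfl
  have hQ₀ : 0 ≤ 2 * a * b + 2 * b * c + 2 * c * a - a ^ 2 - b ^ 2 - c ^ 2 := by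
    nlinarith [gauge_nonneg (s := C) (p₂ - p₃), gauge_nonneg (s := C) (p₁ - p₃),
      gauge_nonneg (s := C) (p₁ - p₂)]
  have hsqrt : Real.sqrt 3 ≤ 2 := Real.sqrt_le_iff.2 ⟨by norm_num, by norm_num⟩
  have hR₀ : 0 ≤ R123 := hR123 ▸ circumradius_nonneg
  subst hR12 hR13 hR23
  refine ⟨⟨by linarith, by linarith⟩, max_le (hside p₁ (by simp) p₂ (by simp)) <|
    max_le (hside p₁ (by simp) p₃ (by simp)) (hside p₂ (by simp) p₃ (by simp)), ?_⟩
  nlinarith [mul_le_mul_of_nonneg_right hsqrt (mul_nonneg hQ₀ hR₀)]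

/-- For a nondegenerate triangle in `ℝⁿ` and a `0`-symmetric convex body `C`,
the pairwise circumradii and the circumradius of the triangle satisfy the two
triangle-type inequalities and the upper bound for `R₁₂₃`. -/
theorem circumradius_triangle_bounds_higher_dim {n : ℕ} (C : Set (Fin n → ℝ))
    (hC : IsCompact C) (hconv : Convex ℝ C) (hint : (interior C).Nonempty)
    (hsym : C = -C)
    (p₁ p₂ p₃ : Fin n → ℝ) (hindep : AffineIndependent ℝ ![p₁, p₂, p₃])
    (R12 R13 R23 R123 : ℝ)
    (hR12 : R12 = circumradius {p₁, p₂} C) (hR13 : R13 = circumradius {p₁, p₃} C)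
    (hR23 : R23 = circumradius {p₂, p₃} C)
    (hR123 : R123 = circumradius (convexHull ℝ {p₁, p₂, p₃}) C)
    (hpos : 0 < R13) (hord : R13 ≤ R12) :
    (R12 - R13 ≤ R23 ∧ R23 ≤ R12 + R13) ∧
    max R12 (max R13 R23) ≤ R123 ∧
    Real.sqrt 3 * (2 * R12 * R13 + 2 * R12 * R23 + 2 * R13 * R23
      - R12 ^ 2 - R13 ^ 2 - R23 ^ 2) * R123 ≤ 8 * R12 * R13 * R23 :=
  circumradius_triangle_bounds_higher_dim_general C hconv hint hsym p₁ p₂ p₃ R12 R13 R23 R123 hR12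
    hR13 hR23 hR123
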